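/- Let ε > 0 and let y ∈ c₀₀ with ‖y‖ = 1 and ‖y‖_{ℓ∞} ≤ ε/2. Suppose y = y₁ + y₂ + ⋯ + y_ℓ where y₁ < y₂ < ⋯ < y_ℓ in c₀₀, ‖y_i‖ ≤ ε for all 1 ≤ i ≤ ℓ, and ‖y_i‖ ≥ ε/2 for all 1 ≤ i ≤ ℓ − 1. Then ((ℓ−1)/f(ℓ))·(ε/2) ≤ 1 and 1 ≤ ℓ·ε. -/

import Mathlib

abbrev c00 : Type := ℕ →₀ ℝ

noncomputable def flog (x : ℝ) : ℝ := Real.logb 2 (x + 1)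

noncomputable def supNorm (x : c00) : ℝ := ⨆ i, |x i|

def proj (E : Finset ℕ) (x : c00) : c00 := x.filter (· ∈ E)

def FLt (A B : Finset ℕ) : Prop := ∀ a ∈ A, ∀ b ∈ B, a < b

def IsNormC00 (N : c00 → ℝ) : Prop :=
  (∀ x, N x = 0 ↔ x = 0) ∧ (∀ x y, N (x + y) ≤ N x + N y) ∧
    ∀ (a : ℝ) (x : c00), N (a • x) = |a| * N x

def schSet (N : c00 → ℝ) (x : c00) : Set ℝ :=
  {s | ∃ n : ℕ, 2 ≤ n ∧ ∃ E : Fin n → Finset ℕ,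
    (∀ i j : Fin n, i < j → FLt (E i) (E j)) ∧
    s = (flog n)⁻¹ * ∑ i, N (proj (E i) x)}

def IsSchlumprechtNorm (N : c00 → ℝ) : Prop :=
  IsNormC00 N ∧ ∀ x : c00, IsLUB (insert (supNorm x) (schSet N x)) (N x)

def IsBlockSeq (x : ℕ → c00) : Prop :=
  (∀ n, x n ≠ 0) ∧ ∀ n, ∀ i ∈ (x n).support, ∀ j ∈ (x (n+1)).support, i < j

def SeqEquiv (N : c00 → ℝ) (u v : ℕ → c00) : Prop :=
  ∃ c : ℝ, 1 ≤ c ∧ ∀ a : ℕ →₀ ℝ,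
    (1 / c) * N (a.sum fun i t => t • u i) ≤ N (a.sum fun i t => t • v i) ∧
    N (a.sum fun i t => t • v i) ≤ c * N (a.sum fun i t => t • u i)

/-!
Since `y₁ < ⋯ < y_ℓ`, the coordinate projections onto the supports of the `yᵢ` recover the pieces,
so the sets `supp yᵢ` are admissible in the implicit equation and give
`(1 / f(ℓ)) Σ ‖yᵢ‖ ≤ ‖y‖ = 1`; all but the last summand are at least `ε / 2`.
The other bound is the triangle inequality `1 = ‖y‖ ≤ Σ ‖yᵢ‖ ≤ ℓ ε`.
-/

open Finset

namespace IsNormC00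

variable {N : c00 → ℝ}

lemma map_zero (hN : IsNormC00 N) : N 0 = 0 :=
  (hN.1 0).2 rfl

lemma nonneg (hN : IsNormC00 N) (x : c00) : 0 ≤ N x := by
  have hneg : N (-x) = N x := by rw [← neg_one_smul ℝ x, hN.2.2]; simp
  have h := hN.2.1 x (-x)
  rw [add_neg_cancel, hN.map_zero, hneg] at h
  linarith

lemma le_sum (hN : IsNormC00 N) {ι : Type*} (s : Finset ι) (x : ι → c00) :
    N (∑ i ∈ s, x i) ≤ ∑ i ∈ s, N (x i) :=
  le_sum_of_subadditive N hN.map_zero.le hN.2.1 s x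

end IsNormC00

lemma FLt.disjoint {A B : Finset ℕ} (h : FLt A B) : Disjoint A B :=
  disjoint_left.2 fun a hA hB => (h a hA a hB).false

lemma proj_support_sum {ι : Type*} [Fintype ι] {x : ι → c00}
    (hx : Pairwise fun i j => Disjoint (x i).support (x j).support) (i : ι) :
    proj (x i).support (∑ j, x j) = x i := by
  classical
  rw [proj, Finsupp.filter_sum, sum_eq_single i]
  · exact (Finsupp.filter_eq_self_iff _ _).2 fun a ha => Finsupp.mem_support_iff.2 ha
  · intro j _ hji
    refine (Finsupp.filter_eq_zero_iff _ _).2 fun a ha => ?_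
    exact Finsupp.notMem_support_iff.1 (disjoint_right.1 (hx hji) ha)
  · simp

lemma flog_pos {x : ℝ} (hx : 0 < x) : 0 < flog x :=
  Real.logb_pos one_lt_two (by linarith)

lemma natCast_mul_le_sum_fin_succ {n : ℕ} {f : Fin (n + 1) → ℝ} {c : ℝ}
    (hlast : 0 ≤ f (Fin.last n)) (h : ∀ i : Fin n, c ≤ f i.castSucc) :
    n * c ≤ ∑ i, f i := by
  have hinit := card_nsmul_le_sum univ (fun i : Fin n => f i.castSucc) c fun i _ => h i
  rw [card_univ, Fintype.card_fin, nsmul_eq_mul] at hinit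
  rw [Fin.sum_univ_castSucc]
  linarith

namespace IsSchlumprechtNorm

variable {N : c00 → ℝ}

lemma inv_flog_mul_sum_le (hN : IsSchlumprechtNorm N) (x : c00) {n : ℕ} (hn : 2 ≤ n)
    (E : Fin n → Finset ℕ) (hE : ∀ i j, i < j → FLt (E i) (E j)) :
    (flog n)⁻¹ * ∑ i, N (proj (E i) x) ≤ N x :=
  (hN.2 x).1 (Set.mem_insert_of_mem _ ⟨n, hn, E, hE, rfl⟩)

lemma inv_flog_mul_sum_le_of_block (hN : IsSchlumprechtNorm N) {n : ℕ} (hn : 2 ≤ n)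
    (x : Fin n → c00) (hx : ∀ i j, i < j → FLt (x i).support (x j).support) :
    (flog n)⁻¹ * ∑ i, N (x i) ≤ N (∑ i, x i) := by
  have hdisj : Pairwise fun i j => Disjoint (x i).support (x j).support := fun i j hij =>
    hij.lt_or_gt.elim (fun h => (hx i j h).disjoint) fun h => (hx j i h).disjoint.symm
  simpa only [proj_support_sum hdisj] using
    hN.inv_flog_mul_sum_le (∑ i, x i) hn (fun i => (x i).support) hx

end IsSchlumprechtNorm

theorem splitting_estimate_general
    (N : c00 → ℝ) (hN : IsSchlumprechtNorm N)
    (ε : ℝ)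
    (y : c00) (hy : N y = 1)
    (l : ℕ) (ys : Fin l → c00)
    (hsum : y = ∑ i, ys i)
    (hblock : ∀ i j : Fin l, i < j →
      ∀ a ∈ (ys i).support, ∀ b ∈ (ys j).support, a < b)
    (hupper : ∀ i : Fin l, N (ys i) ≤ ε)
    (hlower : ∀ i : Fin l, (i : ℕ) + 1 < l → ε / 2 ≤ N (ys i)) :
    ((l : ℝ) - 1) / flog l * (ε / 2) ≤ 1 ∧ 1 ≤ (l : ℝ) * ε := by
  subst hsum
  refine ⟨?_, ?_⟩
  · rcases lt_or_ge l 2 with hl | hl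
    -- for `ℓ = 0` the left side vanishes because `f(0) = 0` and `x / 0 = 0`
    · interval_cases l <;> simp [flog]
    obtain ⟨n, rfl⟩ : ∃ n, l = n + 1 := ⟨l - 1, by omega⟩
    have hsplit := hN.inv_flog_mul_sum_le_of_block hl ys hblock
    have hpieces : n * (ε / 2) ≤ ∑ i, N (ys i) :=
      natCast_mul_le_sum_fin_succ (hN.1.nonneg _) fun i => hlower _ (by simp)
    have hflog : 0 < flog (n + 1 : ℕ) := flog_pos (by positivity)
    calc ((n + 1 : ℕ) - 1 : ℝ) / flog (n + 1 : ℕ) * (ε / 2)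
        = (flog (n + 1 : ℕ))⁻¹ * (n * (ε / 2)) := by push_cast; ring
      _ ≤ (flog (n + 1 : ℕ))⁻¹ * ∑ i, N (ys i) := by gcongr
      _ ≤ 1 := hy ▸ hsplit
  · calc 1 = N (∑ i, ys i) := hy.symm
      _ ≤ ∑ i, N (ys i) := hN.1.le_sum _ _
      _ ≤ ∑ _i : Fin l, ε := sum_le_sum fun i _ => hupper i
      _ = l * ε := by simp

/-- the splitting estimate for a norm-one vector `y` with
`‖y‖_{ℓ∞} ≤ ε/2` decomposed as `y = y₁ + ⋯ + y_ℓ` with `y₁ < ⋯ < y_ℓ`,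
`‖yᵢ‖ ≤ ε` for all `i` and `‖yᵢ‖ ≥ ε/2` for `i ≤ ℓ - 1`. -/
theorem splitting_estimate
    (N : c00 → ℝ) (hN : IsSchlumprechtNorm N)
    (ε : ℝ) (hε : 0 < ε)
    (y : c00) (hy : N y = 1) (hysup : supNorm y ≤ ε / 2)
    (l : ℕ) (ys : Fin l → c00)
    (hsum : y = ∑ i, ys i)
    (hblock : ∀ i j : Fin l, i < j →
      ∀ a ∈ (ys i).support, ∀ b ∈ (ys j).support, a < b)
    (hupper : ∀ i : Fin l, N (ys i) ≤ ε)
    (hlower : ∀ i : Fin l, (i : ℕ) + 1 < l → ε / 2 ≤ N (ys i)) :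
    ((l : ℝ) - 1) / flog l * (ε / 2) ≤ 1 ∧ 1 ≤ (l : ℝ) * ε :=
  splitting_estimate_general N hN ε y hy l ys hsum hblock hupper hlower
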